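/- arXiv:0806.0569 — 3 statements merged into one kernel-verified Lean document; each statement's English description precedes it below -/
import Mathlib

section
/- For i = 1, 2, let (J_i, K_i, η_i, ε_i) be an adjoint couple of bifunctors from C_i' to C_i with parameter in X. Let H : C₁ ⥤ C₂ and H' : C₁' ⥤ C₂' be functors, and let a be a morphism of bifunctors with components a_{X,M} : J₂(X, H'(M)) ⟶ H(J₁(X, M)), natural in both the parameter X and in M. Then there exists a unique morphism of bifunctors b, with components b_{X,N} : H'(K₁(X, N)) ⟶ K₂(X, H(N)) natural in X and N, such that for every object X the equality (ε₂_X ∗ H) ∘ (J₂(X, b_{X,−})) = (H ∗ ε₁_X) ∘ (a_{X, K₁(X,−)}) holds as natural transformations J₂(X, H'(K₁(X, −))) ⟶ H(−); moreover, for this b, the dual equality (b_{X, J₁(X,−)}) ∘ (H' ∗ η₁_X) = (K₂(X, a_{X,−})) ∘ (η₂_X ∗ H') of natural transformations H' ⟶ K₂(X, H(J₁(X, −))) also holds for every X. -/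
/-!
For each parameter `x`, the family `b x` is forced to be the transpose of `a x ≫ H ε₁` under
`J₂(x,−) ⊣ K₂(x,−)`, i.e. `b = K₂(a ≫ H ε₁) ∘ η₂`, because the counit equation says exactly that
`b x` transposes to `a x ≫ H ε₁`. Naturality in `N` and the unit equation follow from naturality
of the adjunction bijection and the triangle identities; naturality in the parameter uses that
the units and counits of both couples are generalized transformations.
-/

open CategoryTheory Opposite

/-- An *adjoint couple of bifunctors* (ACB) from `C'` to `C` with parameter in `X`:
bifunctors `L : X × C' ⥤ C` and `R : Xᵒᵖ × C ⥤ C'` (given in curried form), together with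
adjunctions `L(x,−) ⊣ R(x,−)` for every parameter `x`, whose units and counits are
generalized transformations in the parameter. -/
structure ACB (X : Type*) [Category X] (C' : Type*) [Category C'] (C : Type*) [Category C] where
  /-- the left adjoint bifunctor -/
  L : X ⥤ C' ⥤ C
  /-- the right adjoint bifunctor -/
  R : Xᵒᵖ ⥤ C ⥤ C'
  /-- the adjunction `L(x,−) ⊣ R(x,−)` for every parameter `x` -/
  adj : ∀ x : X, L.obj x ⊣ R.obj (op x)
  /-- the counits form a generalized transformation -/
  counit_gen : ∀ {A B : X} (f : A ⟶ B) (c : C),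
    (L.obj A).map ((R.map f.op).app c) ≫ (adj A).counit.app c =
      (L.map f).app ((R.obj (op B)).obj c) ≫ (adj B).counit.app c
  /-- the units form a generalized transformation -/
  unit_gen : ∀ {A B : X} (f : A ⟶ B) (c' : C'),
    (adj B).unit.app c' ≫ (R.map f.op).app ((L.obj B).obj c') =
      (adj A).unit.app c' ≫ (R.obj (op A)).map ((L.map f).app c')

namespace ACB

variable {X C' C : Type*} [Category X] [Category C'] [Category C]

lemma homEquiv_comp_R_map_app (F : ACB X C' C) {x x' : X} (f : x ⟶ x') {c' : C'} {c : C}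
    (φ : (F.L.obj x').obj c' ⟶ c) :
    (F.adj x').homEquiv c' c φ ≫ (F.R.map f.op).app c =
      (F.adj x).homEquiv c' c ((F.L.map f).app c' ≫ φ) := by
  simp only [Adjunction.homEquiv_unit, Category.assoc, Functor.map_comp]
  rw [(F.R.map f.op).naturality, reassoc_of% F.unit_gen f c']

variable {C₁ C₁' C₂ C₂' : Type*} [Category C₁] [Category C₁'] [Category C₂] [Category C₂']
  (acb₁ : ACB X C₁' C₁) (acb₂ : ACB X C₂' C₂) {H : C₁ ⥤ C₂} {H' : C₁' ⥤ C₂'}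
  (a : ∀ (x : X) (M : C₁'), (acb₂.L.obj x).obj (H'.obj M) ⟶ H.obj ((acb₁.L.obj x).obj M))

def mate (x : X) (N : C₁) :
    H'.obj ((acb₁.R.obj (op x)).obj N) ⟶ (acb₂.R.obj (op x)).obj (H.obj N) :=
  (acb₂.adj x).homEquiv _ (H.obj N) (a x _ ≫ H.map ((acb₁.adj x).counit.app N))

variable {acb₁ acb₂ a}

lemma eq_mate_iff {x : X} {N : C₁}
    (b : H'.obj ((acb₁.R.obj (op x)).obj N) ⟶ (acb₂.R.obj (op x)).obj (H.obj N)) :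
    b = mate acb₁ acb₂ a x N ↔
      (acb₂.L.obj x).map b ≫ (acb₂.adj x).counit.app (H.obj N) =
        a x ((acb₁.R.obj (op x)).obj N) ≫ H.map ((acb₁.adj x).counit.app N) := by
  rw [mate, Adjunction.eq_homEquiv_apply, Adjunction.homEquiv_counit]

lemma map_comp_mate
    (ha_nat : ∀ (x : X) {M M' : C₁'} (g : M ⟶ M'),
      (acb₂.L.obj x).map (H'.map g) ≫ a x M' = a x M ≫ H.map ((acb₁.L.obj x).map g))
    (x : X) {M : C₁'} {N : C₁} (g : M ⟶ (acb₁.R.obj (op x)).obj N) :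
    H'.map g ≫ mate acb₁ acb₂ a x N =
      (acb₂.adj x).homEquiv _ _
        (a x M ≫ H.map ((acb₁.L.obj x).map g ≫ (acb₁.adj x).counit.app N)) := by
  rw [mate, ← Adjunction.homEquiv_naturality_left, reassoc_of% ha_nat, ← H.map_comp]
  rfl

lemma mate_naturality
    (ha_nat : ∀ (x : X) {M M' : C₁'} (g : M ⟶ M'),
      (acb₂.L.obj x).map (H'.map g) ≫ a x M' = a x M ≫ H.map ((acb₁.L.obj x).map g))
    (x : X) {N N' : C₁} (g : N ⟶ N') :
    H'.map ((acb₁.R.obj (op x)).map g) ≫ mate acb₁ acb₂ a x N' =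
      mate acb₁ acb₂ a x N ≫ (acb₂.R.obj (op x)).map (H.map g) := by
  rw [map_comp_mate ha_nat, mate, ← Adjunction.homEquiv_naturality_right, Category.assoc,
    ← H.map_comp]
  dsimp only [Functor.id_obj]
  rw [Adjunction.counit_naturality]

lemma mate_naturality_param
    (ha_nat : ∀ (x : X) {M M' : C₁'} (g : M ⟶ M'),
      (acb₂.L.obj x).map (H'.map g) ≫ a x M' = a x M ≫ H.map ((acb₁.L.obj x).map g))
    (ha_par : ∀ {x x' : X} (f : x ⟶ x') (M : C₁'),
      (acb₂.L.map f).app (H'.obj M) ≫ a x' M = a x M ≫ H.map ((acb₁.L.map f).app M))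
    {x x' : X} (f : x ⟶ x') (N : C₁) :
    H'.map ((acb₁.R.map f.op).app N) ≫ mate acb₁ acb₂ a x N =
      mate acb₁ acb₂ a x' N ≫ (acb₂.R.map f.op).app (H.obj N) := by
  rw [map_comp_mate ha_nat, mate, homEquiv_comp_R_map_app, acb₁.counit_gen, H.map_comp,
    reassoc_of% ha_par]
  rfl

lemma map_unit_comp_mate
    (ha_nat : ∀ (x : X) {M M' : C₁'} (g : M ⟶ M'),
      (acb₂.L.obj x).map (H'.map g) ≫ a x M' = a x M ≫ H.map ((acb₁.L.obj x).map g))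
    (x : X) (M : C₁') :
    H'.map ((acb₁.adj x).unit.app M) ≫ mate acb₁ acb₂ a x ((acb₁.L.obj x).obj M) =
      (acb₂.adj x).unit.app (H'.obj M) ≫ (acb₂.R.obj (op x)).map (a x M) := by
  rw [map_comp_mate ha_nat]
  dsimp only [Functor.id_obj]
  rw [Adjunction.left_triangle_components, H.map_id, Category.comp_id,
    Adjunction.homEquiv_unit]

end ACB

/-- **The mates lemma for adjoint couples of bifunctors.**
Given ACBs `(J₁, K₁)` and `(J₂, K₂)` with parameter in `X`, functors `H : C₁ ⥤ C₂` and
`H' : C₁' ⥤ C₂'`, and a morphism of bifunctors `a` with components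
`a x M : J₂(x, H'(M)) ⟶ H(J₁(x, M))` natural in the parameter `x` and in `M`, there is a
unique morphism of bifunctors `b`, with components `b x N : H'(K₁(x,N)) ⟶ K₂(x,H(N))`
natural in `x` and `N`, making the counit compatibility diagram commute for every parameter
`x`; moreover this `b` also makes the dual unit compatibility diagram commute. -/
theorem stmt3 {X C₁ C₁' C₂ C₂' : Type*}
    [Category X] [Category C₁] [Category C₁'] [Category C₂] [Category C₂']
    (acb₁ : ACB X C₁' C₁) (acb₂ : ACB X C₂' C₂)
    (H : C₁ ⥤ C₂) (H' : C₁' ⥤ C₂')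
    (a : ∀ (x : X) (M : C₁'), (acb₂.L.obj x).obj (H'.obj M) ⟶ H.obj ((acb₁.L.obj x).obj M))
    (ha_nat : ∀ (x : X) {M M' : C₁'} (g : M ⟶ M'),
      (acb₂.L.obj x).map (H'.map g) ≫ a x M' = a x M ≫ H.map ((acb₁.L.obj x).map g))
    (ha_par : ∀ {x x' : X} (f : x ⟶ x') (M : C₁'),
      (acb₂.L.map f).app (H'.obj M) ≫ a x' M = a x M ≫ H.map ((acb₁.L.map f).app M)) :
    ∃ b : ∀ (x : X) (N : C₁),
        H'.obj ((acb₁.R.obj (op x)).obj N) ⟶ (acb₂.R.obj (op x)).obj (H.obj N),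
      ((∀ (x : X) {N N' : C₁} (g : N ⟶ N'),
          H'.map ((acb₁.R.obj (op x)).map g) ≫ b x N' =
            b x N ≫ (acb₂.R.obj (op x)).map (H.map g)) ∧
        (∀ {x x' : X} (f : x ⟶ x') (N : C₁),
          H'.map ((acb₁.R.map f.op).app N) ≫ b x N =
            b x' N ≫ (acb₂.R.map f.op).app (H.obj N)) ∧
        -- the counit compatibility diagram
        (∀ (x : X) (N : C₁),
          (acb₂.L.obj x).map (b x N) ≫ (acb₂.adj x).counit.app (H.obj N) =
            a x ((acb₁.R.obj (op x)).obj N) ≫ H.map ((acb₁.adj x).counit.app N)) ∧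
        -- moreover, the dual unit compatibility diagram also holds for this `b`
        (∀ (x : X) (M : C₁'),
          H'.map ((acb₁.adj x).unit.app M) ≫ b x ((acb₁.L.obj x).obj M) =
            (acb₂.adj x).unit.app (H'.obj M) ≫ (acb₂.R.obj (op x)).map (a x M))) ∧
      -- uniqueness among binatural families satisfying the counit compatibility diagram
      (∀ b' : ∀ (x : X) (N : C₁),
          H'.obj ((acb₁.R.obj (op x)).obj N) ⟶ (acb₂.R.obj (op x)).obj (H.obj N),
        (∀ (x : X) {N N' : C₁} (g : N ⟶ N'),
          H'.map ((acb₁.R.obj (op x)).map g) ≫ b' x N' =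
            b' x N ≫ (acb₂.R.obj (op x)).map (H.map g)) →
        (∀ {x x' : X} (f : x ⟶ x') (N : C₁),
          H'.map ((acb₁.R.map f.op).app N) ≫ b' x N =
            b' x' N ≫ (acb₂.R.map f.op).app (H.obj N)) →
        (∀ (x : X) (N : C₁),
          (acb₂.L.obj x).map (b' x N) ≫ (acb₂.adj x).counit.app (H.obj N) =
            a x ((acb₁.R.obj (op x)).obj N) ≫ H.map ((acb₁.adj x).counit.app N)) →
        b' = b) := by
  refine ⟨ACB.mate acb₁ acb₂ a,
    ⟨ACB.mate_naturality ha_nat, ACB.mate_naturality_param ha_nat ha_par,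
      fun x N => (ACB.eq_mate_iff _).1 rfl, ACB.map_unit_comp_mate ha_nat⟩,
    fun b' _ _ hb' => ?_⟩
  funext x N
  exact (ACB.eq_mate_iff _).2 (hb' x N)
end

section
/- Let C and D be categories equipped with shift functors T_C and T_D (self-equivalences given by a shift by ℤ), let (L, R, η, ε) be an adjunction with L : C ⥤ D, and let l : L ∘ T_C ≅ T_D ∘ L be a natural isomorphism. Then: (1) there exists a unique natural isomorphism r : R ∘ T_D ≅ T_C ∘ R such that the unit η : 1_C ⟶ R ∘ L and the counit ε : L ∘ R ⟶ 1_D commute with the suspensions, i.e. η and ε are morphisms of suspended functors when R ∘ L and L ∘ R carry the commutation isomorphisms composed from l and r; (2) if moreover C and D are pretriangulated categories and (L, l) is δ-exact for a sign δ ∈ {1, −1} — meaning that for every distinguished triangle (A, B, C, u, v, w) of C the triangle (LA, LB, LC, Lu, Lv, δ • (l_A ∘ L(w))) is distinguished in D — then (R, r) is δ-exact with the same sign δ. -/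
/-!
The compatible `r` is forced: the unit condition says that `r⁻¹` is the mate of `l` under
`L ⊣ R`, and this mate is invertible because the shifts are equivalences (its iterated mate is
the conjugate of `l`). For `δ`-exactness, let `X₁ → X₂ → X₃ → X₁⟦1⟧` be distinguished in `D` and
complete `R X₁ → R X₂` to a distinguished triangle `R X₁ → R X₂ → Z → (R X₁)⟦1⟧`. Its image under
`(L, δ l)` is distinguished, so the counit extends to a morphism of triangles whose third
component is some `φ : L Z ⟶ X₃`. The adjoint transpose `Z ⟶ R X₃` of `φ` is an isomorphism by a
five-lemma argument on `Hom(W, -)`, and it identifies the two triangles in `C`.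
-/

open CategoryTheory CategoryTheory.Limits Pretriangulated
open CategoryTheory.Category CategoryTheory.Adjunction.CommShift

namespace CategoryTheory

theorem isIso_mateEquiv_natTrans_of_equivalence {C D E F : Type*} [Category C] [Category D]
    [Category E] [Category F] {L₁ : C ⥤ D} {R₁ : D ⥤ C} {L₂ : E ⥤ F} {R₂ : F ⥤ E}
    (adj₁ : L₁ ⊣ R₁) (adj₂ : L₂ ⊣ R₂) (eC : C ≌ E) (eD : D ≌ F)
    (α : eC.functor ⋙ L₂ ≅ L₁ ⋙ eD.functor) :
    IsIso (mateEquiv adj₁ adj₂ α.hom).natTrans := by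
  have : IsIso
      (mateEquiv eD.toAdjunction eC.toAdjunction (mateEquiv adj₁ adj₂ α.hom)).natTrans := by
    rw [iterated_mateEquiv_conjugateEquiv adj₁ adj₂ eC.toAdjunction eD.toAdjunction α.hom]
    infer_instance
  rw [← (mateEquiv eD.toAdjunction eC.toAdjunction).symm_apply_apply (mateEquiv adj₁ adj₂ α.hom)]
  simp only [mateEquiv_symm_apply, Equivalence.toAdjunction_unit, Equivalence.toAdjunction_counit]
  infer_instance

namespace Adjunction

lemma leftAdjoint_additive_of_hasBinaryBiproducts {C D : Type*} [Category C] [Category D]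
    [Preadditive C] [Preadditive D] [HasBinaryBiproducts C] {L : C ⥤ D} {R : D ⥤ C}
    (adj : L ⊣ R) : L.Additive := by
  have := adj.isLeftAdjoint
  have := preservesBinaryBiproducts_of_preservesBinaryCoproducts L
  exact Functor.additive_of_preservesBinaryBiproducts L

section Shift

variable {C D : Type*} [Category C] [Category D] [HasShift C ℤ] [HasShift D ℤ]
  {L : C ⥤ D} {R : D ⥤ C} (adj : L ⊣ R)
  (l : shiftFunctor C (1 : ℤ) ⋙ L ≅ L ⋙ shiftFunctor D (1 : ℤ))

noncomputable def rightAdjointShiftIso : shiftFunctor D (1 : ℤ) ⋙ R ≅ R ⋙ shiftFunctor C (1 : ℤ) :=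
  haveI : IsIso (mateEquiv adj adj l.hom).natTrans := isIso_mateEquiv_natTrans_of_equivalence
    adj adj (shiftEquiv C (1 : ℤ)) (shiftEquiv D (1 : ℤ)) l
  (asIso (mateEquiv adj adj l.hom).natTrans).symm

lemma compatibilityUnit_rightAdjointShiftIso :
    CompatibilityUnit adj l (adj.rightAdjointShiftIso l) := by
  intro X
  rw [← reassoc_of% unit_mateEquiv adj adj l.hom X]
  change _ = _ ≫ (adj.rightAdjointShiftIso l).inv.app (L.obj X) ≫ _
  rw [Iso.inv_hom_id_app, comp_id]

variable {l} in
lemma homEquiv_map_comp_app_comp_shift_counit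
    {r : shiftFunctor D (1 : ℤ) ⋙ R ≅ R ⋙ shiftFunctor C (1 : ℤ)}
    (hr : CompatibilityCounit adj l r) {X : C} {Y : D} (f : X ⟶ (R.obj Y)⟦(1 : ℤ)⟧) :
    adj.homEquiv X (Y⟦(1 : ℤ)⟧) (L.map f ≫ l.hom.app (R.obj Y) ≫ (adj.counit.app Y)⟦(1 : ℤ)⟧') =
      f ≫ r.inv.app Y := by
  rw [← Equiv.eq_symm_apply, homEquiv_counit, L.map_comp, assoc, hr Y, ← L.map_comp_assoc]
  simp

end Shift

section Pretriangulated

variable {C D : Type*} [Category C] [Category D] [HasZeroObject C] [HasZeroObject D]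
  [Preadditive C] [Preadditive D] [HasShift C ℤ] [HasShift D ℤ]
  [∀ n : ℤ, (shiftFunctor C n).Additive] [∀ n : ℤ, (shiftFunctor D n).Additive]
  [Pretriangulated C] [Pretriangulated D]
  {L : C ⥤ D} {R : D ⥤ C} (adj : L ⊣ R)
  {l : shiftFunctor C (1 : ℤ) ⋙ L ≅ L ⋙ shiftFunctor D (1 : ℤ)}
  {r : shiftFunctor D (1 : ℤ) ⋙ R ≅ R ⋙ shiftFunctor C (1 : ℤ)} {δ : ℤ}
  {T : Triangle D} {Z : C} {v' : R.obj T.obj₂ ⟶ Z} {w' : Z ⟶ (R.obj T.obj₁)⟦(1 : ℤ)⟧}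
  {φ : L.obj Z ⟶ T.obj₃}

lemma eq_zero_of_map_comp_eq_zero_of_distTriang (hr : CompatibilityCounit adj l r) (hδ : δ * δ = 1)
    (hT : T ∈ distTriang D) (hT' : Triangle.mk (R.map T.mor₁) v' w' ∈ distTriang C)
    (hφ₂ : L.map v' ≫ φ = adj.counit.app T.obj₂ ≫ T.mor₂)
    (hφ₃ : (δ • (L.map w' ≫ l.hom.app (R.obj T.obj₁))) ≫ (adj.counit.app T.obj₁)⟦(1 : ℤ)⟧' =
      φ ≫ T.mor₃)
    {X : C} {f : X ⟶ Z} (hf : L.map f ≫ φ = 0) : f = 0 := by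
  have := adj.leftAdjoint_additive_of_hasBinaryBiproducts
  have hfw : f ≫ w' = 0 := by
    have : L.map (f ≫ w') ≫ l.hom.app _ ≫ (adj.counit.app T.obj₁)⟦(1 : ℤ)⟧' =
        δ • (L.map f ≫ φ ≫ T.mor₃) := by
      rw [← hφ₃, Preadditive.zsmul_comp, Preadditive.comp_zsmul, smul_smul, hδ, one_smul,
        L.map_comp, assoc, assoc]
    rw [← cancel_mono (r.inv.app T.obj₁), zero_comp,
      ← adj.homEquiv_map_comp_app_comp_shift_counit hr, this, reassoc_of% hf, zero_comp,
      smul_zero, adj.homAddEquiv_zero]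
  obtain ⟨g, rfl⟩ : ∃ g : X ⟶ R.obj T.obj₂, f = g ≫ v' :=
    Triangle.coyoneda_exact₃ _ hT' f hfw
  obtain ⟨h, hh⟩ := T.coyoneda_exact₂ hT (L.map g ≫ adj.counit.app _) (by
    rw [assoc, ← hφ₂, ← L.map_comp_assoc, hf])
  have hg : g = adj.homEquiv _ _ h ≫ R.map T.mor₁ := by
    rw [← Adjunction.homEquiv_naturality_right, ← hh]
    simp [Adjunction.homEquiv_unit]
  have h₁₂ : R.map T.mor₁ ≫ v' = 0 := comp_distTriang_mor_zero₁₂ _ hT'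
  rw [hg, assoc, h₁₂, comp_zero]

lemma exists_map_comp_eq_of_distTriang (hr : CompatibilityCounit adj l r) (hδ : δ * δ = 1)
    (hT : T ∈ distTriang D) (hT' : Triangle.mk (R.map T.mor₁) v' w' ∈ distTriang C)
    (hφ₂ : L.map v' ≫ φ = adj.counit.app T.obj₂ ≫ T.mor₂)
    (hφ₃ : (δ • (L.map w' ≫ l.hom.app (R.obj T.obj₁))) ≫ (adj.counit.app T.obj₁)⟦(1 : ℤ)⟧' =
      φ ≫ T.mor₃)
    {X : C} (y : L.obj X ⟶ T.obj₃) : ∃ f : X ⟶ Z, L.map f ≫ φ = y := by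
  have := adj.leftAdjoint_additive_of_hasBinaryBiproducts
  have := adj.right_adjoint_additive
  set x := adj.homEquiv _ _ (δ • (y ≫ T.mor₃)) ≫ r.hom.app T.obj₁ with hx
  have hx₁ : x ≫ (R.map T.mor₁)⟦(1 : ℤ)⟧' = 0 := by
    have h₃₁ : T.mor₃ ≫ T.mor₁⟦(1 : ℤ)⟧' = 0 := comp_distTriang_mor_zero₃₁ _ hT
    have hr₁ : R.map (T.mor₁⟦(1 : ℤ)⟧') ≫ r.hom.app T.obj₂ =
        r.hom.app T.obj₁ ≫ (R.map T.mor₁)⟦(1 : ℤ)⟧' := r.hom.naturality T.mor₁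
    rw [hx, assoc, ← hr₁, ← assoc, ← Adjunction.homEquiv_naturality_right,
      Preadditive.zsmul_comp, assoc, h₃₁, comp_zero, smul_zero, adj.homAddEquiv_zero, zero_comp]
  obtain ⟨x₃, hx₃⟩ : ∃ x₃ : X ⟶ Z, x = x₃ ≫ w' := Triangle.coyoneda_exact₁ _ hT' x hx₁
  have hx' : L.map x ≫ l.hom.app _ ≫ (adj.counit.app T.obj₁)⟦(1 : ℤ)⟧' = δ • (y ≫ T.mor₃) :=
    (adj.homEquiv X (T.obj₁⟦(1 : ℤ)⟧)).injective (by
      rw [adj.homEquiv_map_comp_app_comp_shift_counit hr, hx, assoc, Iso.hom_inv_id_app]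
      exact comp_id _)
  have hx₃' : (L.map x₃ ≫ φ) ≫ T.mor₃ = y ≫ T.mor₃ := by
    rw [assoc, ← hφ₃, Preadditive.zsmul_comp, Preadditive.comp_zsmul, assoc,
      ← L.map_comp_assoc, ← hx₃, hx', smul_smul, hδ, one_smul]
  obtain ⟨y₂, hy₂⟩ := T.coyoneda_exact₃ hT (y - L.map x₃ ≫ φ) (by
    rw [Preadditive.sub_comp, hx₃', sub_self])
  refine ⟨x₃ + adj.homEquiv _ _ y₂ ≫ v', ?_⟩
  have : L.map (adj.homEquiv _ _ y₂) ≫ adj.counit.app T.obj₂ = y₂ := by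
    simp [Adjunction.homEquiv_unit]
  rw [L.map_add, Preadditive.add_comp, L.map_comp, assoc, hφ₂, reassoc_of% this, ← hy₂,
    add_sub_cancel]

lemma isIso_homEquiv_of_distTriang (hr : CompatibilityCounit adj l r) (hδ : δ * δ = 1)
    (hT : T ∈ distTriang D) (hT' : Triangle.mk (R.map T.mor₁) v' w' ∈ distTriang C)
    (hφ₂ : L.map v' ≫ φ = adj.counit.app T.obj₂ ≫ T.mor₂)
    (hφ₃ : (δ • (L.map w' ≫ l.hom.app (R.obj T.obj₁))) ≫ (adj.counit.app T.obj₁)⟦(1 : ℤ)⟧' =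
      φ ≫ T.mor₃) :
    IsIso (adj.homEquiv _ _ φ) := by
  have := adj.leftAdjoint_additive_of_hasBinaryBiproducts
  have hcomp {X : C} (f : X ⟶ Z) : f ≫ adj.homEquiv _ _ φ = adj.homEquiv _ _ (L.map f ≫ φ) :=
    (adj.homEquiv_naturality_left f φ).symm
  refine isIso_of_yoneda_map_bijective _ fun X => ⟨fun f g hfg => ?_, fun y => ?_⟩
  · rw [← sub_eq_zero]
    refine adj.eq_zero_of_map_comp_eq_zero_of_distTriang hr hδ hT hT' hφ₂ hφ₃ ?_
    have : L.map f ≫ φ = L.map g ≫ φ := by simpa only [hcomp, Equiv.apply_eq_iff_eq] using hfg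
    rw [L.map_sub, Preadditive.sub_comp, this, sub_self]
  · obtain ⟨f, hf⟩ :=
      adj.exists_map_comp_eq_of_distTriang hr hδ hT hT' hφ₂ hφ₃ ((adj.homEquiv _ _).symm y)
    exact ⟨f, (hcomp f).trans (by rw [hf, Equiv.apply_symm_apply])⟩

theorem rightAdjoint_map_distinguished (hr : CompatibilityCounit adj l r) (hδ : δ * δ = 1)
    (hL : ∀ T ∈ distTriang C, Triangle.mk (L.map T.mor₁) (L.map T.mor₂)
      (δ • (L.map T.mor₃ ≫ l.hom.app T.obj₁)) ∈ distTriang D)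
    (hT : T ∈ distTriang D) :
    Triangle.mk (R.map T.mor₁) (R.map T.mor₂) (δ • (R.map T.mor₃ ≫ r.hom.app T.obj₁)) ∈
      distTriang C := by
  have := adj.leftAdjoint_additive_of_hasBinaryBiproducts
  have := adj.right_adjoint_additive
  obtain ⟨Z, v', w', hT'⟩ := distinguished_cocone_triangle (R.map T.mor₁)
  obtain ⟨φ, hφ₂, hφ₃⟩ : ∃ φ : L.obj Z ⟶ T.obj₃, L.map v' ≫ φ = adj.counit.app T.obj₂ ≫ T.mor₂ ∧
      (δ • (L.map w' ≫ l.hom.app (R.obj T.obj₁))) ≫ (adj.counit.app T.obj₁)⟦(1 : ℤ)⟧' =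
        φ ≫ T.mor₃ :=
    complete_distinguished_triangle_morphism _ _ (hL _ hT') hT
      (adj.counit.app T.obj₁) (adj.counit.app T.obj₂) (adj.counit.naturality T.mor₁)
  have := adj.isIso_homEquiv_of_distTriang hr hδ hT hT' hφ₂ hφ₃
  refine isomorphic_distinguished _ hT' _ (Triangle.isoMk (Triangle.mk _ v' w')
    (Triangle.mk (R.map T.mor₁) (R.map T.mor₂) _) (Iso.refl _) (Iso.refl _)
    (asIso (adj.homEquiv Z T.obj₃ φ) : Z ≅ R.obj T.obj₃) ?_ ?_ ?_).symm
  · exact (comp_id _).trans (id_comp _).symm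
  · change v' ≫ adj.homEquiv Z T.obj₃ φ = 𝟙 _ ≫ R.map T.mor₂
    rw [id_comp, ← adj.homEquiv_naturality_left, hφ₂, adj.homEquiv_naturality_right]
    simp [Adjunction.homEquiv_unit]
  · change w' ≫ (𝟙 _)⟦(1 : ℤ)⟧' =
      adj.homEquiv Z T.obj₃ φ ≫ (δ • (R.map T.mor₃ ≫ r.hom.app T.obj₁))
    rw [(shiftFunctor C (1 : ℤ)).map_id, comp_id, Preadditive.comp_zsmul, ← assoc,
      ← adj.homEquiv_naturality_right, ← hφ₃, Preadditive.zsmul_comp, ← adj.homAddEquiv_apply,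
      map_zsmul, adj.homAddEquiv_apply, assoc, adj.homEquiv_map_comp_app_comp_shift_counit hr,
      Preadditive.zsmul_comp, smul_smul, hδ, one_smul, assoc, Iso.inv_hom_id_app]
    exact (comp_id _).symm

end Pretriangulated

end Adjunction

end CategoryTheory

/-- **Suspension of adjunctions (Proposition `suspAdjExists`).**
Let `C`, `D` be categories with shift (by `ℤ`), `L ⊣ R` an adjunction and
`l : L ∘ T_C ≅ T_D ∘ L` a natural isomorphism. Then:
(1) there is a unique natural isomorphism `r : R ∘ T_D ≅ T_C ∘ R` making the unit and counit
of the adjunction into morphisms of suspended functors (for the commutation isomorphisms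
composed from `l` and `r`);
(2) if moreover `C` and `D` are pretriangulated and `(L, l)` is `δ`-exact
(`δ = 1` or `δ = -1`), then `(R, r)` is `δ`-exact with the same `δ`. -/
theorem stmt4 {C D : Type*} [Category C] [Category D]
    [HasShift C ℤ] [HasShift D ℤ]
    (L : C ⥤ D) (R : D ⥤ C) (adj : L ⊣ R)
    (l : shiftFunctor C (1 : ℤ) ⋙ L ≅ L ⋙ shiftFunctor D (1 : ℤ)) :
    -- (1) unique `r` compatible with unit and counit
    (∃! r : shiftFunctor D (1 : ℤ) ⋙ R ≅ R ⋙ shiftFunctor C (1 : ℤ),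
      (∀ A : C,
        adj.unit.app ((shiftFunctor C (1 : ℤ)).obj A) ≫
            R.map (l.hom.app A) ≫ r.hom.app (L.obj A) =
          (shiftFunctor C (1 : ℤ)).map (adj.unit.app A)) ∧
      (∀ B : D,
        L.map (r.hom.app B) ≫ l.hom.app (R.obj B) ≫
            (shiftFunctor D (1 : ℤ)).map (adj.counit.app B) =
          adj.counit.app ((shiftFunctor D (1 : ℤ)).obj B))) ∧
    -- (2) in the pretriangulated case, `δ`-exactness of `(L, l)` implies that of `(R, r)`
    (∀ [HasZeroObject C] [Preadditive C] [∀ n : ℤ, (shiftFunctor C n).Additive]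
        [Pretriangulated C]
        [HasZeroObject D] [Preadditive D] [∀ n : ℤ, (shiftFunctor D n).Additive]
        [Pretriangulated D]
        (δ : ℤ), (δ = 1 ∨ δ = -1) →
      (∀ T : Triangle C, (T ∈ distTriang C) →
        Triangle.mk (L.map T.mor₁) (L.map T.mor₂)
          (δ • (L.map T.mor₃ ≫ l.hom.app T.obj₁)) ∈ distTriang D) →
      ∀ r : shiftFunctor D (1 : ℤ) ⋙ R ≅ R ⋙ shiftFunctor C (1 : ℤ),
        ((∀ A : C,
            adj.unit.app ((shiftFunctor C (1 : ℤ)).obj A) ≫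
                R.map (l.hom.app A) ≫ r.hom.app (L.obj A) =
              (shiftFunctor C (1 : ℤ)).map (adj.unit.app A)) ∧
          (∀ B : D,
            L.map (r.hom.app B) ≫ l.hom.app (R.obj B) ≫
                (shiftFunctor D (1 : ℤ)).map (adj.counit.app B) =
              adj.counit.app ((shiftFunctor D (1 : ℤ)).obj B))) →
        ∀ T : Triangle D, (T ∈ distTriang D) →
          Triangle.mk (R.map T.mor₁) (R.map T.mor₂)
            (δ • (R.map T.mor₃ ≫ r.hom.app T.obj₁)) ∈ distTriang C) := by
  have hunit := adj.compatibilityUnit_rightAdjointShiftIso l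
  refine ⟨⟨adj.rightAdjointShiftIso l, ⟨fun A => (hunit A).symm,
    fun B => (compatibilityCounit_of_compatibilityUnit adj _ _ hunit B).symm⟩,
    fun r hr => compatibilityUnit_unique_right adj l _ _ (fun A => (hr.1 A).symm) hunit⟩, ?_⟩
  intro _ _ _ _ _ _ _ _ δ hδ hL r hr T hT
  exact adj.rightAdjoint_map_distinguished (fun B => (hr.2 B).symm)
    (by rcases hδ with rfl | rfl <;> rfl) hL hT
end

section
/- Let F : C₁ ⥤ C₂ and G : C₂ ⥤ C₃ be strong monoidal functors between symmetric monoidal closed categories, let H : C₁ ⥤ C₃ be a strong monoidal functor, and let ea : G ∘ F ≅ H be a monoidal natural isomorphism, i.e. for all A, B in C₁ one has ea_{A⊗B} ∘ G(μ^F_{A,B}) ∘ μ^G_{FA,FB} = μ^H_{A,B} ∘ (ea_A ⊗ ea_B). Then for all objects A, B of C₁ the following diagram commutes: the composite (G∘F)[A,B] --G(fh^F_{A,B})--> G[F A, F B] --fh^G_{FA,FB}--> [G F A, G F B] --[1, ea_B]--> [G F A, H B] equals the composite (G∘F)[A,B] --ea_{[A,B]}--> H[A,B] --fh^H_{A,B}-->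 [H A, H B] --[ea_A, 1]--> [G F A, H B]. -/
open CategoryTheory MonoidalCategory MonoidalClosed Functor.LaxMonoidal

section Defs

variable {C : Type*} [Category C] [MonoidalCategory C] [SymmetricCategory C] [MonoidalClosed C]

/-- The left evaluation `ev^l_{A,K} : [A,K] ⊗ A ⟶ K`. -/
noncomputable def evl (A K : C) : (ihom A).obj K ⊗ A ⟶ K :=
  (β_ ((ihom A).obj K) A).hom ≫ (ihom.ev A).app K

/-- The left coevaluation `coev^l_{A,K} : K ⟶ [A, K ⊗ A]`. -/
noncomputable def coevl (A K : C) : K ⟶ (ihom A).obj (K ⊗ A) :=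
  (ihom.coev A).app K ≫ (ihom A).map (β_ A K).hom

variable {D : Type*} [Category D] [MonoidalCategory D] [SymmetricCategory D] [MonoidalClosed D]

/-- The canonical morphism `fh_{A,B} : F[A,B] ⟶ [F A, F B]` for a strong monoidal functor
`F`, given by the composite
`F[A,B] ⟶ [F A, F[A,B] ⊗ F A] ⟶ [F A, F([A,B] ⊗ A)] ⟶ [F A, F B]`. -/
noncomputable def fh (F : C ⥤ D) [F.Monoidal] (A B : C) :
    F.obj ((ihom A).obj B) ⟶ (ihom (F.obj A)).obj (F.obj B) :=
  coevl (F.obj A) (F.obj ((ihom A).obj B)) ≫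
    (ihom (F.obj A)).map (μ F ((ihom A).obj B) A) ≫
    (ihom (F.obj A)).map (F.map (evl A B))

end Defs

/-!
A morphism `g : K ⟶ [X, Y]` is determined by `g ▷ X ≫ ev^l`, and `fh^F` is characterised by
`fh^F ▷ F A ≫ ev^l = μ^F ≫ F(ev^l)`. Testing against `ev^l` in this way shows that `fh` is
compatible with composition, `fh^{G ∘ F} = fh^G ∘ G(fh^F)`, and natural in monoidal
transformations `α : F ⟶ F'`, i.e. `[1, α_B] ∘ fh^F = [α_A, 1] ∘ fh^{F'} ∘ α_{[A,B]}`.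
The theorem is this naturality square for `ea`, rewritten along the first identity.
-/

namespace MonoidalClosed

variable {C : Type*} [Category C] [MonoidalCategory C] [SymmetricCategory C] [MonoidalClosed C]

lemma whiskerRight_evl {K X Y : C} (g : K ⟶ (ihom X).obj Y) :
    g ▷ X ≫ evl X Y = (β_ K X).hom ≫ uncurry g := by
  rw [evl, BraidedCategory.braiding_naturality_left_assoc, uncurry_eq]

lemma coevl_whiskerRight_evl (X K : C) : coevl X K ▷ X ≫ evl X (K ⊗ X) = 𝟙 (K ⊗ X) := by
  rw [whiskerRight_evl, coevl, ← curry_id_eq_coev, uncurry_natural_right, uncurry_curry]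
  simp only [Functor.id_obj, Category.id_comp, SymmetricCategory.symmetry]

lemma hom_ext_evl {K X Y : C} {f g : K ⟶ (ihom X).obj Y}
    (h : f ▷ X ≫ evl X Y = g ▷ X ≫ evl X Y) : f = g := by
  rw [whiskerRight_evl, whiskerRight_evl, cancel_epi] at h
  exact uncurry_injective h

lemma ihom_map_whiskerRight_evl {K X Y Y' : C} (g : K ⟶ (ihom X).obj Y) (v : Y ⟶ Y') :
    (g ≫ (ihom X).map v) ▷ X ≫ evl X Y' = g ▷ X ≫ evl X Y ≫ v := by
  rw [whiskerRight_evl, uncurry_natural_right, ← Category.assoc, ← whiskerRight_evl,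
    Category.assoc]

lemma pre_app_whiskerRight_evl {K X X' Y : C} (g : K ⟶ (ihom X').obj Y) (u : X ⟶ X') :
    (g ≫ (pre u).app Y) ▷ X ≫ evl X Y = K ◁ u ≫ g ▷ X' ≫ evl X' Y := by
  rw [whiskerRight_evl, whiskerRight_evl, uncurry_natural_left, uncurry_pre,
    BraidedCategory.braiding_naturality_right_assoc, whisker_exchange_assoc, uncurry_eq]

end MonoidalClosed

section fh

variable {C : Type*} [Category C] [MonoidalCategory C] [SymmetricCategory C] [MonoidalClosed C]
variable {D : Type*} [Category D] [MonoidalCategory D] [SymmetricCategory D] [MonoidalClosed D]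

lemma fh_whiskerRight_evl (F : C ⥤ D) [F.Monoidal] (A B : C) :
    fh F A B ▷ F.obj A ≫ evl (F.obj A) (F.obj B) = μ F ((ihom A).obj B) A ≫ F.map (evl A B) := by
  rw [fh, ← Functor.map_comp, MonoidalClosed.ihom_map_whiskerRight_evl,
    reassoc_of% MonoidalClosed.coevl_whiskerRight_evl]

lemma fh_comp {E : Type*} [Category E] [MonoidalCategory E] [SymmetricCategory E]
    [MonoidalClosed E] (F : C ⥤ D) [F.Monoidal] (G : D ⥤ E) [G.Monoidal] (A B : C) :
    fh (F ⋙ G) A B = G.map (fh F A B) ≫ fh G (F.obj A) (F.obj B) := by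
  refine (MonoidalClosed.hom_ext_evl (.trans ?_ (fh_whiskerRight_evl (F ⋙ G) A B).symm)).symm
  dsimp only [Functor.comp_obj]
  rw [comp_whiskerRight, Category.assoc, fh_whiskerRight_evl, μ_natural_left_assoc,
    ← G.map_comp, fh_whiskerRight_evl, comp_μ, Category.assoc, Functor.map_comp,
    Functor.comp_map]

lemma fh_naturality {F F' : C ⥤ D} [F.Monoidal] [F'.Monoidal] (α : F ⟶ F')
    (hα : ∀ A B : C, μ F A B ≫ α.app (A ⊗ B) = (α.app A ⊗ₘ α.app B) ≫ μ F' A B) (A B : C) :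
    fh F A B ≫ (ihom (F.obj A)).map (α.app B) =
      α.app ((ihom A).obj B) ≫ fh F' A B ≫ (MonoidalClosed.pre (α.app A)).app (F'.obj B) := by
  refine MonoidalClosed.hom_ext_evl ?_
  rw [MonoidalClosed.ihom_map_whiskerRight_evl, reassoc_of% fh_whiskerRight_evl,
    ← Category.assoc (α.app _), MonoidalClosed.pre_app_whiskerRight_evl, α.naturality,
    comp_whiskerRight, Category.assoc, fh_whiskerRight_evl, ← Category.assoc, hα,
    tensorHom_def', Category.assoc, Category.assoc]

end fh

/-- **Compatibility of `fh` with composition (cf. Theorem `compof^*_theo`).**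
Given strong monoidal functors `F : C₁ ⥤ C₂`, `G : C₂ ⥤ C₃`, `H : C₁ ⥤ C₃` and a monoidal
natural isomorphism `ea : G ∘ F ≅ H`, the diagram
`[1, ea_B] ∘ fh^G_{FA,FB} ∘ G(fh^F_{A,B}) = [ea_A, 1] ∘ fh^H_{A,B} ∘ ea_{[A,B]}` commutes. -/
theorem stmt9 {C₁ : Type*} [Category C₁] [MonoidalCategory C₁] [SymmetricCategory C₁]
    [MonoidalClosed C₁]
    {C₂ : Type*} [Category C₂] [MonoidalCategory C₂] [SymmetricCategory C₂]
    [MonoidalClosed C₂]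
    {C₃ : Type*} [Category C₃] [MonoidalCategory C₃] [SymmetricCategory C₃]
    [MonoidalClosed C₃]
    (F : C₁ ⥤ C₂) [F.Monoidal] (G : C₂ ⥤ C₃) [G.Monoidal] (H : C₁ ⥤ C₃) [H.Monoidal]
    (ea : F ⋙ G ≅ H)
    (hea : ∀ A B : C₁,
      μ G (F.obj A) (F.obj B) ≫ G.map (μ F A B) ≫ ea.hom.app (A ⊗ B) =
        (ea.hom.app A ⊗ₘ ea.hom.app B) ≫ μ H A B)
    (A B : C₁) :
    G.map (fh F A B) ≫ fh G (F.obj A) (F.obj B) ≫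
        (ihom (G.obj (F.obj A))).map (ea.hom.app B) =
      ea.hom.app ((ihom A).obj B) ≫ fh H A B ≫
        (MonoidalClosed.pre (ea.hom.app A)).app (H.obj B) := by
  have hea_comp (A B : C₁) :
      μ (F ⋙ G) A B ≫ ea.hom.app (A ⊗ B) = (ea.hom.app A ⊗ₘ ea.hom.app B) ≫ μ H A B := by
    rw [comp_μ, Category.assoc, hea]
  rw [← Category.assoc, ← fh_comp]
  exact fh_naturality ea.hom hea_comp A B
end
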